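/- With E, ≤_B, W, S_B, ℓ as above, the following are equivalent: (i) S_B generates W; (ii) ℓ(w) < ∞ for every w ∈ W; (iii) the linearly ordered set (E, ≤_B) is isomorphic to a subset of ℤ with its natural order (equivalently, every interval {e'' : e ≤_B e'' ≤_B e'} is finite). -/

import Mathlib

variable {E : Type*} [LinearOrder E]

/-- A transposition of two consecutive elements of the linearly ordered set `E`. -/
def IsConsecSwap (s : Equiv.Perm E) : Prop :=
  ∃ e e' : E, e ⋖ e' ∧ s = Equiv.swap e e'

/-- The length function associated to the set of transpositions of consecutive
elements, with value `⊤` when no expression exists. -/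
noncomputable def ellB (w : Equiv.Perm E) : ℕ∞ :=
  sInf {n : ℕ∞ | ∃ L : List (Equiv.Perm E),
    (∀ s ∈ L, IsConsecSwap s) ∧ L.prod = w ∧ (L.length : ℕ∞) = n}

/-!
A product of consecutive transpositions moves each point across only finitely many elements,
and such permutations form a subgroup; so if `swap a b` is generated, the interval `[a, b]` is
finite. Conversely, when intervals are finite any two elements are joined by a chain of covering
pairs, and composing consecutive transpositions along the chain produces every transposition,
hence every finitary permutation. Finite intervals are exactly what an order embedding into `ℤ`
needs (number the elements from a base point). The equivalence of generation with finite length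
holds because the generating set is closed under inverses, so the subgroup it generates consists
of words in it.
-/

open Equiv Set

theorem IsConsecSwap.isSwap {s : Perm E} (hs : IsConsecSwap s) : s.IsSwap := by
  obtain ⟨e, e', he, rfl⟩ := hs
  exact ⟨e, e', he.ne, rfl⟩

theorem IsConsecSwap.inv {s : Perm E} (hs : IsConsecSwap s) : IsConsecSwap s⁻¹ := by
  obtain ⟨e, e', he, rfl⟩ := hs
  exact ⟨e, e', he, swap_inv e e'⟩

theorem ellB_ne_top_iff_mem_closure {w : Perm E} :
    ellB w ≠ ⊤ ↔ w ∈ Subgroup.closure {s : Perm E | IsConsecSwap s} := by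
  have hinv : {s : Perm E | IsConsecSwap s}⁻¹ = {s | IsConsecSwap s} :=
    Set.ext fun s => ⟨fun h => inv_inv s ▸ h.inv, IsConsecSwap.inv⟩
  rw [← Subgroup.mem_toSubmonoid, Subgroup.closure_toSubmonoid, hinv, union_self,
    ← SetLike.mem_coe, Submonoid.closure_eq_image_prod, ellB, Ne, sInf_eq_top]
  constructor
  · intro h
    push Not at h
    obtain ⟨_, ⟨L, hL, hw, -⟩, -⟩ := h
    exact ⟨L, hL, hw⟩
  · rintro ⟨L, hL, rfl⟩ h
    exact ENat.natCast_ne_top _ (h _ ⟨L, hL, rfl, rfl⟩)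

theorem swap_mem_closure_isConsecSwap [LocallyFiniteOrder E] (a b : E) :
    swap a b ∈ Subgroup.closure {s : Perm E | IsConsecSwap s} := by
  wlog hab : a ≤ b generalizing a b
  · exact swap_comm a b ▸ this b a (le_of_not_ge hab)
  have hchain := le_iff_reflTransGen_covBy.mp hab
  clear hab
  induction hchain with
  | refl => exact swap_self a ▸ one_mem _
  | tail _ hcd ih =>
    exact SubmonoidClass.swap_mem_trans _ ih (Subgroup.subset_closure ⟨_, _, hcd, rfl⟩)

theorem mem_closure_isConsecSwap_iff [LocallyFiniteOrder E] {w : Perm E} :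
    w ∈ Subgroup.closure {s : Perm E | IsConsecSwap s} ↔ {e | w e ≠ e}.Finite := by
  have horbit (x : E) :
      w x ∈ MulAction.orbit (Subgroup.closure {s : Perm E | IsConsecSwap s}) x :=
    (swap_mem_closure_isSwap fun _ hs => IsConsecSwap.isSwap hs).mp
      (swap_mem_closure_isConsecSwap _ _)
  exact (mem_closure_isSwap (S := {s : Perm E | IsConsecSwap s}) fun _ hs => hs.isSwap).trans
    (and_iff_left horbit)

def finiteDisplacement : Subgroup (Perm E) where
  carrier := {w | ∀ x, (uIcc x (w x)).Finite}
  one_mem' x := by simp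
  mul_mem' {v w} hv hw x := ((hw x).union (hv (w x))).subset uIcc_subset_uIcc_union_uIcc
  inv_mem' {w} hw x := by simpa [uIcc_comm] using hw (w⁻¹ x)

theorem IsConsecSwap.mem_finiteDisplacement {s : Perm E} (hs : IsConsecSwap s) :
    s ∈ finiteDisplacement := by
  obtain ⟨e, e', he, rfl⟩ := hs
  intro x
  rw [swap_apply_def]
  split_ifs with h h'
  · rw [h, uIcc_of_le he.le, he.Icc_eq]; exact toFinite _
  · rw [h', uIcc_of_ge he.le, he.Icc_eq]; exact toFinite _
  · simp

theorem finite_Icc_of_swap_mem_closure {a b : E}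
    (h : swap a b ∈ Subgroup.closure {s : Perm E | IsConsecSwap s}) : (Icc a b).Finite := by
  have hle : Subgroup.closure {s : Perm E | IsConsecSwap s} ≤ finiteDisplacement :=
    (Subgroup.closure_le _).mpr fun _ hs => hs.mem_finiteDisplacement
  simpa using ((hle h) a).subset Icc_subset_uIcc

theorem exists_strictMono_int_iff_finite_Icc :
    (∃ f : E → ℤ, StrictMono f) ↔ ∀ a b : E, (Icc a b).Finite := by
  constructor
  · rintro ⟨f, hf⟩ a b
    exact ((finite_Icc (f a) (f b)).preimage hf.injective.injOn).subset
      fun x hx => ⟨hf.monotone hx.1, hf.monotone hx.2⟩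
  · intro h
    cases isEmpty_or_nonempty E with
    | inl _ => exact ⟨isEmptyElim, fun {a} => isEmptyElim a⟩
    | inr hE =>
      let := LocallyFiniteOrder.ofFiniteIcc h
      let := LinearLocallyFiniteOrder.succOrder E
      let := LinearLocallyFiniteOrder.predOrder E
      exact ⟨toZ hE.some, toZ_strictMono⟩

theorem generators_length_integers_tfae_general :
    ((∀ w : Equiv.Perm E, {e : E | w e ≠ e}.Finite →
        w ∈ Subgroup.closure {s : Equiv.Perm E | IsConsecSwap s}) ↔
      (∀ w : Equiv.Perm E, {e : E | w e ≠ e}.Finite → ellB w ≠ ⊤)) ∧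
    ((∀ w : Equiv.Perm E, {e : E | w e ≠ e}.Finite → ellB w ≠ ⊤) ↔
      (∃ f : E → ℤ, StrictMono f)) := by
  simp only [ellB_ne_top_iff_mem_closure, iff_self, true_and]
  rw [exists_strictMono_int_iff_finite_Icc]
  refine ⟨fun h a b => finite_Icc_of_swap_mem_closure (h _ finite_compl_fixedBy_swap),
    fun h w hw => ?_⟩
  let := LocallyFiniteOrder.ofFiniteIcc h
  exact mem_closure_isConsecSwap_iff.mpr hw

/-- The following are equivalent: (i) the transpositions of consecutive elements generate
the group of finitary permutations of `E`; (ii) every finitary permutation has finite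
length; (iii) `(E, ≤)` is isomorphic to a subset of `ℤ` with its natural order. -/
theorem generators_length_integers_tfae [Countable E] :
    ((∀ w : Equiv.Perm E, {e : E | w e ≠ e}.Finite →
        w ∈ Subgroup.closure {s : Equiv.Perm E | IsConsecSwap s}) ↔
      (∀ w : Equiv.Perm E, {e : E | w e ≠ e}.Finite → ellB w ≠ ⊤)) ∧
    ((∀ w : Equiv.Perm E, {e : E | w e ≠ e}.Finite → ellB w ≠ ⊤) ↔
      (∃ f : E → ℤ, StrictMono f)) :=
  generators_length_integers_tfae_general
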